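/- (Unifier preservation under composition with a recorded binding) Let σ be a substitution, x a variable and t an expression with x ∉ Var(t) and x ∉ Dom(σ). For any substitution θ: θ unifies both the equation x = t and all bindings of σ if and only if θ unifies all bindings of σ ∘ {x ↦ t} and satisfies θ(x) =_AU θ(t). -/
import Mathlib


/-- Expressions in the free monoid over atoms `A` and variables `V`:
a (normalised) list expression is a word over `V ⊕ A`. -/
abbrev Expr (V A : Type) := List (V ⊕ A)

/-- Apply a substitution (variables to expressions) homomorphically. -/
def applyS {V A : Type} (σ : V → Expr V A) (t : Expr V A) : Expr V A :=
  t.flatMap (Sum.elim σ (fun a => [Sum.inr a]))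

/-- Apply a ground substitution (variables to lists of atoms) homomorphically. -/
def applyG {V A : Type} (θ : V → List A) (t : Expr V A) : List A :=
  t.flatMap (Sum.elim θ (fun a => [a]))

/-- The substitution {x ↦ t}. -/
def single {V A : Type} [DecidableEq V] (x : V) (t : Expr V A) : V → Expr V A :=
  fun y => if y = x then t else [Sum.inl y]

/-- Composition σ ∘ τ: first apply σ, then τ. -/
def compS {V A : Type} (σ τ : V → Expr V A) : V → Expr V A :=
  fun y => applyS τ (σ y)

lemma applyG_applyS_single {V A : Type} [DecidableEq V] (θ : V → List A)
    (x : V) (t : Expr V A) (h : θ x = applyG θ t) (s : Expr V A) :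
    applyG θ (applyS (single x t) s) = applyG θ s := by
  induction s with
  | nil => rfl
  | cons a s ih =>
    cases a with
    | inl y =>
      simp only [applyS, applyG, List.flatMap_cons, List.flatMap_append] at *
      rw [ih]
      congr 1
      simp only [Sum.elim_inl, single]
      by_cases hy : y = x
      · subst hy; simp [h, applyG]
      · simp [hy, applyG]
    | inr a =>
      simp only [applyS, applyG, List.flatMap_cons, List.flatMap_append] at *
      rw [ih]; rfl

/-- Unifier preservation under composition with a recorded binding (rule Subst1):
for x ∉ Var(t) and x ∉ Dom(σ), a ground substitution θ unifies the equation
x = t together with all bindings of σ iff it unifies all bindings of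
σ ∘ {x ↦ t} and satisfies θ(x) = θ(t). -/
theorem subst1_binding_preservation {V A : Type} [DecidableEq V]
    (σ : V → Expr V A) (x : V) (t : Expr V A) (θ : V → List A)
    (hxt : Sum.inl x ∉ t) (hdom : σ x = [Sum.inl x]) :
    (θ x = applyG θ t ∧ ∀ y : V, θ y = applyG θ (σ y)) ↔
      ((∀ y : V, θ y = applyG θ (compS σ (single x t) y)) ∧ θ x = applyG θ t) := by
  constructor
  · rintro ⟨hx, hσ⟩
    refine ⟨fun y => ?_, hx⟩
    rw [compS, applyG_applyS_single θ x t hx]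
    exact hσ y
  · rintro ⟨hσ, hx⟩
    refine ⟨hx, fun y => ?_⟩
    have := hσ y
    rwa [compS, applyG_applyS_single θ x t hx] at this
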